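/- Let $R$ be a commutative ring, let $e, f, c \in \mathbb{N}$ with $e + 1 = f + c$, and let $x_1, \dots, x_e, y_1, \dots, y_f, \lambda \in R$. Then in $R[[t]]$ the coefficient of $t^{c}$ in $\prod_{j=1}^e (1+(x_j+\lambda)t) \cdot \prod_{k=1}^f (1+(y_k+\lambda)t)^{-1}$ equals the coefficient of $t^{c}$ in $\prod_{j=1}^e (1+x_j t) \cdot \prod_{k=1}^f (1+y_k t)^{-1}$; that is, the coefficient in the critical degree $c = e - f + 1$ is independent of $\lambda$. (Via the splitting principle, this expresses that for vector bundles $\mathscr{E}$, $\mathscr{F}$ of ranks $e$, $f$, the term of codimension $e-f+1$ in $\frac{c(\mathscr{E})}{c(\mathscr{F})} \cap [X]$ does not change if both $\mathscr{E}$ and $\mathscr{F}$ are tensored by a line bundle.) -/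

import Mathlib

open PowerSeries Finset

/-- The power series `1 + λ t`. -/
noncomputable def oneAdd {R : Type*} [CommRing R] (l : R) : PowerSeries R :=
  1 + PowerSeries.C l * PowerSeries.X

/-- The inverse power series `(1 + λ t)⁻¹`, via `invOfUnit` (constant coefficient `1`). -/
noncomputable def invOneAdd {R : Type*} [CommRing R] (l : R) : PowerSeries R :=
  PowerSeries.invOfUnit (oneAdd l) 1

/-- The tensor operation `T_λ`, defined coefficientwise:
`T_λ(∑ aᵢ tⁱ) = ∑ aᵢ tⁱ (1+λt)^{-(i+1)}`; the coefficient of `t^m` is the finite sum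
`∑_{i=0}^m aᵢ · [t^{m-i}] (1+λt)^{-(i+1)}`. -/
noncomputable def T {R : Type*} [CommRing R] (l : R) (F : PowerSeries R) : PowerSeries R :=
  PowerSeries.mk fun m => ∑ i ∈ Finset.range (m + 1),
    PowerSeries.coeff i F * PowerSeries.coeff (m - i) (invOneAdd l ^ (i + 1))

/-!
Put `s = t/(1+λt)`. Since `1 + (z+λ)t = (1+λt)(1 + z s)`, the twisted series is
`(1+λt)^(e-f) P(s) = (1+λt)^(c-1) P(s)`, where `P` is the untwisted one. The coefficient of `t^c`
is then the residue of `P(s) ds / s^(c+1)`, which is invariant under the change of variables: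
concretely, `s^i (1+λt)^(c-1)` equals `t^i (1+λt)^(c-1-i)`, a polynomial of degree `< c` when
`i < c`, and equals `t^c (1+λt)⁻¹` when `i = c`.
-/

section

variable {R : Type*} [CommRing R]

lemma oneAdd_mul_invOneAdd (z : R) : oneAdd z * invOneAdd z = 1 :=
  mul_invOfUnit _ 1 (by simp [oneAdd])

lemma constantCoeff_invOneAdd (z : R) : constantCoeff (invOneAdd z) = 1 := by
  simp [invOneAdd]

lemma coeff_oneAdd_pow_of_lt (z : R) {m n : ℕ} (h : m < n) : coeff n (oneAdd z ^ m) = 0 := by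
  have : oneAdd z ^ m = rescale z (((1 + Polynomial.X) ^ m : Polynomial R) : R⟦X⟧) := by
    simp [oneAdd, rescale_X]
  rw [this, coeff_rescale, Polynomial.coeff_coe, Polynomial.coeff_one_add_X_pow,
    Nat.choose_eq_zero_of_lt h, Nat.cast_zero, mul_zero]

lemma hasSubst_X_mul_invOneAdd (l : R) : HasSubst (X * invOneAdd l) :=
  HasSubst.of_constantCoeff_zero' (by simp)

noncomputable def twistSubst (l : R) : R⟦X⟧ →ₐ[R] R⟦X⟧ :=
  substAlgHom (hasSubst_X_mul_invOneAdd l)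

lemma twistSubst_X (l : R) : twistSubst l X = X * invOneAdd l :=
  substAlgHom_X _

lemma twistSubst_C (l z : R) : twistSubst l (C z) = C z :=
  (twistSubst l).commutes z

lemma oneAdd_mul_twistSubst_oneAdd (l z : R) :
    oneAdd l * twistSubst l (oneAdd z) = oneAdd (z + l) := by
  have hl := oneAdd_mul_invOneAdd l
  simp only [oneAdd] at hl ⊢
  simp only [map_add, map_one, map_mul, twistSubst_X, twistSubst_C]
  linear_combination (C z * X) * hl

lemma invOneAdd_mul_twistSubst_invOneAdd (l z : R) :
    invOneAdd l * twistSubst l (invOneAdd z) = invOneAdd (z + l) := by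
  refine (left_inv_eq_right_inv (by rw [mul_comm, oneAdd_mul_invOneAdd]) ?_).symm
  have h := congrArg (twistSubst l) (oneAdd_mul_invOneAdd z)
  rw [map_mul, map_one] at h
  rw [← oneAdd_mul_twistSubst_oneAdd l z]
  linear_combination (twistSubst l (oneAdd z) * twistSubst l (invOneAdd z)) *
    oneAdd_mul_invOneAdd l + h

lemma constantCoeff_twistSubst (l : R) (P : R⟦X⟧) :
    constantCoeff (twistSubst l P) = constantCoeff P := by
  obtain ⟨Q, a, rfl⟩ : ∃ Q a, P = X * Q + C a := ⟨_, _, eq_X_mul_shift_add_const P⟩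
  simp [twistSubst_X, twistSubst_C]

lemma coeff_invOneAdd_mul_oneAdd_pow_mul_twistSubst (l : R) (m : ℕ) (P : R⟦X⟧) :
    coeff m (invOneAdd l * oneAdd l ^ m * twistSubst l P) = coeff m P := by
  induction m generalizing P with
  | zero => simp [constantCoeff_twistSubst, constantCoeff_invOneAdd]
  | succ m ih =>
    obtain ⟨Q, a, rfl⟩ : ∃ Q a, P = X * Q + C a := ⟨_, _, eq_X_mul_shift_add_const P⟩
    have key : invOneAdd l * oneAdd l ^ (m + 1) * twistSubst l (X * Q + C a) =
        X * (invOneAdd l * oneAdd l ^ m * twistSubst l Q) + C a * oneAdd l ^ m := by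
      simp only [map_add, map_mul, twistSubst_X, twistSubst_C]
      linear_combination (X * invOneAdd l * oneAdd l ^ m * twistSubst l Q + C a * oneAdd l ^ m) *
        oneAdd_mul_invOneAdd l
    rw [key, map_add, coeff_succ_X_mul, ih, coeff_C_mul, coeff_oneAdd_pow_of_lt l m.lt_succ_self,
      map_add, coeff_succ_X_mul, coeff_C, if_neg m.succ_ne_zero]
    ring

lemma oneAdd_pow_add_mul_invOneAdd_pow_add (l : R) (n m k : ℕ) :
    oneAdd l ^ (n + k) * invOneAdd l ^ (m + k) = oneAdd l ^ n * invOneAdd l ^ m := by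
  rw [pow_add, pow_add, mul_mul_mul_comm, ← mul_pow, oneAdd_mul_invOneAdd, one_pow, mul_one]

lemma prod_oneAdd_add_mul_prod_invOneAdd_add {ι κ : Type*} [Fintype ι] [Fintype κ]
    (x : ι → R) (y : κ → R) (l : R) :
    (∏ j, oneAdd (x j + l)) * ∏ k, invOneAdd (y k + l) =
      oneAdd l ^ Fintype.card ι * invOneAdd l ^ Fintype.card κ *
        twistSubst l ((∏ j, oneAdd (x j)) * ∏ k, invOneAdd (y k)) := by
  simp only [← oneAdd_mul_twistSubst_oneAdd, ← invOneAdd_mul_twistSubst_invOneAdd,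
    prod_mul_distrib, prod_const, card_univ, map_mul, map_prod]
  ring

end

/-- The coefficient in the critical degree `c = e - f + 1` of
`∏ (1+(xⱼ+λ)t) · ∏ (1+(y_k+λ)t)⁻¹` is independent of `λ`. -/
theorem critical_coeff_twist_invariant {R : Type*} [CommRing R] (e f c : ℕ)
    (h : e + 1 = f + c) (x : Fin e → R) (y : Fin f → R) (l : R) :
    PowerSeries.coeff c
        ((∏ j, oneAdd (x j + l)) * ∏ k, invOneAdd (y k + l)) =
      PowerSeries.coeff c
        ((∏ j, oneAdd (x j)) * ∏ k, invOneAdd (y k)) := by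
  have hpow : oneAdd l ^ e * invOneAdd l ^ f = invOneAdd l * oneAdd l ^ c :=
    calc oneAdd l ^ e * invOneAdd l ^ f = oneAdd l ^ (c + e) * invOneAdd l ^ (1 + e) := by
          rw [add_comm 1, h, add_comm c, oneAdd_pow_add_mul_invOneAdd_pow_add]
      _ = invOneAdd l * oneAdd l ^ c := by
          rw [oneAdd_pow_add_mul_invOneAdd_pow_add, pow_one, mul_comm]
  rw [prod_oneAdd_add_mul_prod_invOneAdd_add, Fintype.card_fin, Fintype.card_fin, hpow,
    coeff_invOneAdd_mul_oneAdd_pow_mul_twistSubst]
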